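/- arXiv:2208.04341 — 5 statements merged into one kernel-verified Lean document; each statement's English description precedes it below -/
import Mathlib

section
/- Let α and β be nonempty finite types and let ρ₀, ρ₁, Q₀, Q₁ be positive semidefinite complex matrices indexed by α × β, and let Y be a Hermitian matrix indexed by α × β such that Y − Q₀^{T_B} − ρ₀/2 and Y − Q₁^{T_B} − ρ₁/2 are positive semidefinite. Then for all positive semidefinite matrices Π₀, Π₁ with Π₀ + Π₁ = 1 such that Π₀^{T_B} and Π₁^{T_B} are positive semidefinite, the real part of (1/2)·(Tr(Π₀·ρ₀) + Tr(Π₁·ρ₁)) is at most the real part of Tr(Y). -/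
open Matrix
open scoped ComplexOrder

/-- Partial transpose on the second tensor factor:
`M^{T_B}((i,j),(k,l)) = M((i,l),(k,j))`. -/
def ptB {α β : Type*} (M : Matrix (α × β) (α × β) ℂ) : Matrix (α × β) (α × β) ℂ :=
  Matrix.of fun p q => M (p.1, q.2) (q.1, p.2)

/-! The partial transpose is self-adjoint for the trace pairing, so with the dual slack
`Mᵢ = Y - Qᵢ^{T_B} - ρᵢ/2` one has `Tr(Pᵢ Y) = Tr(Pᵢ Mᵢ) + Tr(Pᵢ^{T_B} Qᵢ) + Tr(Pᵢ ρᵢ)/2`.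
The first two terms are traces of products of positive semidefinite matrices, hence nonnegative;
summing over `i` and using `P₀ + P₁ = 1` gives the bound. -/

theorem Matrix.PosSemidef.trace_mul_nonneg {𝕜 n : Type*} [RCLike 𝕜] [Fintype n]
    {A B : Matrix n n 𝕜} (hA : A.PosSemidef) (hB : B.PosSemidef) : 0 ≤ (A * B).trace := by
  classical
  open scoped MatrixOrder in
  obtain ⟨X, rfl⟩ := CStarAlgebra.nonneg_iff_eq_star_mul_self.mp hA.nonneg
  rw [star_eq_conjTranspose, Matrix.mul_assoc, trace_mul_comm]
  exact (hB.mul_mul_conjTranspose_same X).trace_nonneg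

theorem trace_mul_ptB {α β : Type*} [Fintype α] [Fintype β] (A B : Matrix (α × β) (α × β) ℂ) :
    (A * ptB B).trace = (ptB A * B).trace := by
  simp only [trace, diag, mul_apply, ptB, of_apply]
  rw [← Finset.sum_product', ← Finset.sum_product']
  exact Fintype.sum_equiv
    ⟨fun x => ((x.1.1, x.2.2), (x.2.1, x.1.2)), fun x => ((x.1.1, x.2.2), (x.2.1, x.1.2)),
      fun _ => rfl, fun _ => rfl⟩ _ _ fun _ => rfl

theorem half_trace_mul_le_trace_mul_of_dual_feasible {α β : Type*} [Fintype α] [Fintype β]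
    {P ρ Q Y : Matrix (α × β) (α × β) ℂ} (hP : P.PosSemidef) (hPt : (ptB P).PosSemidef)
    (hQ : Q.PosSemidef) (hfeas : (Y - ptB Q - (1/2 : ℂ) • ρ).PosSemidef) :
    (1/2 : ℂ) * (P * ρ).trace ≤ (P * Y).trace := by
  have hsplit : (P * Y).trace = (P * (Y - ptB Q - (1/2 : ℂ) • ρ)).trace + (ptB P * Q).trace
      + (1/2 : ℂ) * (P * ρ).trace := by
    rw [← trace_mul_ptB]
    simp only [Matrix.mul_sub, Matrix.mul_smul, trace_sub, trace_smul, smul_eq_mul]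
    ring
  rw [hsplit]
  exact le_add_of_nonneg_left (add_nonneg (hP.trace_mul_nonneg hfeas) (hPt.trace_mul_nonneg hQ))

theorem ppt_weak_duality_general {α β : Type*} [Fintype α] [Fintype β]
    [DecidableEq α] [DecidableEq β]
    (ρ₀ ρ₁ Q₀ Q₁ : Matrix (α × β) (α × β) ℂ) (Y : Matrix (α × β) (α × β) ℂ)
    (hQ₀ : Q₀.PosSemidef) (hQ₁ : Q₁.PosSemidef)
    (hfeas₀ : (Y - ptB Q₀ - (1/2 : ℂ) • ρ₀).PosSemidef)
    (hfeas₁ : (Y - ptB Q₁ - (1/2 : ℂ) • ρ₁).PosSemidef) :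
    ∀ P₀ P₁ : Matrix (α × β) (α × β) ℂ,
      P₀.PosSemidef → P₁.PosSemidef → P₀ + P₁ = 1 →
      (ptB P₀).PosSemidef → (ptB P₁).PosSemidef →
      ((1/2 : ℂ) * ((P₀ * ρ₀).trace + (P₁ * ρ₁).trace)).re ≤ Y.trace.re := by
  intro P₀ P₁ hP₀ hP₁ hsum hpt₀ hpt₁
  have hY_trace : (P₀ * Y).trace + (P₁ * Y).trace = Y.trace := by
    rw [← trace_add, ← Matrix.add_mul, hsum, Matrix.one_mul]
  have h := add_le_add (half_trace_mul_le_trace_mul_of_dual_feasible hP₀ hpt₀ hQ₀ hfeas₀)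
    (half_trace_mul_le_trace_mul_of_dual_feasible hP₁ hpt₁ hQ₁ hfeas₁)
  rw [← mul_add, hY_trace] at h
  exact (Complex.le_def.mp h).1

/-- Weak duality for the PPT state-discrimination SDP: any feasible dual solution
`(Y, Q₀, Q₁)` upper bounds the success probability of any PPT measurement `(P₀, P₁)`. -/
theorem ppt_weak_duality {α β : Type*} [Fintype α] [Fintype β] [Nonempty α] [Nonempty β]
    [DecidableEq α] [DecidableEq β]
    (ρ₀ ρ₁ Q₀ Q₁ : Matrix (α × β) (α × β) ℂ) (Y : Matrix (α × β) (α × β) ℂ)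
    (hρ₀ : ρ₀.PosSemidef) (hρ₁ : ρ₁.PosSemidef)
    (hQ₀ : Q₀.PosSemidef) (hQ₁ : Q₁.PosSemidef)
    (hY : Y.IsHermitian)
    (hfeas₀ : (Y - ptB Q₀ - (1/2 : ℂ) • ρ₀).PosSemidef)
    (hfeas₁ : (Y - ptB Q₁ - (1/2 : ℂ) • ρ₁).PosSemidef) :
    ∀ P₀ P₁ : Matrix (α × β) (α × β) ℂ,
      P₀.PosSemidef → P₁.PosSemidef → P₀ + P₁ = 1 →
      (ptB P₀).PosSemidef → (ptB P₁).PosSemidef →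
      ((1/2 : ℂ) * ((P₀ * ρ₀).trace + (P₁ * ρ₁).trace)).re ≤ Y.trace.re :=
  ppt_weak_duality_general ρ₀ ρ₁ Q₀ Q₁ Y hQ₀ hQ₁ hfeas₀ hfeas₁
end

section
/- Let ρ₀ = (1/6)·[[2,0,0,0],[0,1,1,0],[0,1,1,0],[0,0,0,2]] and ρ₁ = (1/2)·[[0,0,0,0],[0,1,-1,0],[0,-1,1,0],[0,0,0,0]] be 4×4 complex matrices indexed by Fin 2 × Fin 2, let P = diag(0,1,1,0), let Π₁ = P ⊗ₖ P (Kronecker product) and Π₀ = 1 − Π₁. Then (1/2)·(Tr(Π₀·(ρ₀ ⊗ₖ ρ₀)) + Tr(Π₁·(ρ₁ ⊗ₖ ρ₁))) = 17/18. -/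
open Matrix
open scoped Kronecker

noncomputable section

/-- Encode a pair of qubits (row/column order 00, 01, 10, 11) as an index in `Fin 4`. -/
def idx4 : Fin 2 × Fin 2 → Fin 4 :=
  fun p => ⟨2 * p.1.val + p.2.val, by have := p.1.isLt; have := p.2.isLt; omega⟩

/-- Uniform mixture of the three symmetric Bell states. -/
def ρ₀ : Matrix (Fin 2 × Fin 2) (Fin 2 × Fin 2) ℂ :=
  (1/6 : ℂ) • Matrix.of fun p q =>
    (!![2,0,0,0; 0,1,1,0; 0,1,1,0; 0,0,0,2] : Matrix (Fin 4) (Fin 4) ℂ) (idx4 p) (idx4 q)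

/-- The antisymmetric Bell state. -/
def ρ₁ : Matrix (Fin 2 × Fin 2) (Fin 2 × Fin 2) ℂ :=
  (1/2 : ℂ) • Matrix.of fun p q =>
    (!![0,0,0,0; 0,1,-1,0; 0,-1,1,0; 0,0,0,0] : Matrix (Fin 4) (Fin 4) ℂ) (idx4 p) (idx4 q)

/-- `P = diag(0,1,1,0)`: projection onto unequal computational outcomes on one Bell pair. -/
def P : Matrix (Fin 2 × Fin 2) (Fin 2 × Fin 2) ℂ :=
  Matrix.diagonal fun p => if p.1 = p.2 then 0 else 1

/-- Answer "antisymmetric" exactly when both pairs give unequal outcomes. -/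
def Pi1 : Matrix ((Fin 2 × Fin 2) × (Fin 2 × Fin 2)) ((Fin 2 × Fin 2) × (Fin 2 × Fin 2)) ℂ :=
  P ⊗ₖ P

/-- Answer "symmetric" otherwise. -/
def Pi0 : Matrix ((Fin 2 × Fin 2) × (Fin 2 × Fin 2)) ((Fin 2 × Fin 2) × (Fin 2 × Fin 2)) ℂ :=
  1 - Pi1

set_option maxHeartbeats 4000000 in
/-- The two-round LOCC attack (measure both pairs in the computational basis, answer
"antisymmetric" iff both pairs disagree) succeeds with probability exactly `17/18`. -/
theorem two_round_locc_attack_success :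
    (1/2 : ℂ) * ((Pi0 * (ρ₀ ⊗ₖ ρ₀)).trace + (Pi1 * (ρ₁ ⊗ₖ ρ₁)).trace) = 17/18 := by
  simp only [Pi0, Pi1, P, ρ₀, ρ₁, idx4, trace, diag, Matrix.sub_mul, Matrix.one_mul,
    trace_sub, kroneckerMap_apply, Matrix.mul_apply, Matrix.smul_apply, diagonal_apply,
    Matrix.of_apply, Fintype.sum_prod_type, Fin.sum_univ_succ, Fin.sum_univ_zero]
  norm_num [Matrix.of_apply, Fin.isValue]
end
end

section
/- Let ρ₀ = (1/6)·[[2,0,0,0],[0,1,1,0],[0,1,1,0],[0,0,0,2]] and ρ₁ = (1/2)·[[0,0,0,0],[0,1,-1,0],[0,-1,1,0],[0,0,0,0]] be 4×4 complex matrices indexed by Fin 2 × Fin 2, and let Y = (1/18)·(9·(ρ₀ ⊗ₖ ρ₀) + 8·(ρ₁ ⊗ₖ ρ₁)). Then: (i) Y is Hermitian; (ii) Tr(Y) = 17/18; and (iii) Y − (ρ₀ ⊗ₖ ρ₀)/2 = (4/9)·(ρ₁ ⊗ₖ ρ₁), which is positive semidefinite. -/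
open Matrix
open scoped Kronecker ComplexOrder

noncomputable section

def Y : Matrix ((Fin 2 × Fin 2) × (Fin 2 × Fin 2)) ((Fin 2 × Fin 2) × (Fin 2 × Fin 2)) ℂ :=
  (1/18 : ℂ) • ((9 : ℂ) • (ρ₀ ⊗ₖ ρ₀) + (8 : ℂ) • (ρ₁ ⊗ₖ ρ₁))

lemma hermρ₀ : ρ₀.IsHermitian := by
  ext ⟨a,b⟩ ⟨c,d⟩
  fin_cases a <;> fin_cases b <;> fin_cases c <;> fin_cases d <;>
    simp [ρ₀, idx4, conjTranspose_apply, Matrix.vecHead, Matrix.vecTail]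

lemma hermρ₁ : ρ₁.IsHermitian := by
  ext ⟨a,b⟩ ⟨c,d⟩
  fin_cases a <;> fin_cases b <;> fin_cases c <;> fin_cases d <;>
    simp [ρ₁, idx4, conjTranspose_apply, Matrix.vecHead, Matrix.vecTail]

lemma herm_kron {m n : Type*} [Fintype m] [Fintype n] [DecidableEq m] [DecidableEq n]
    {A : Matrix m m ℂ} {B : Matrix n n ℂ} (hA : A.IsHermitian) (hB : B.IsHermitian) :
    (A ⊗ₖ B).IsHermitian := by
  ext ⟨i,j⟩ ⟨k,l⟩
  simp only [conjTranspose_apply, kroneckerMap_apply, star_mul']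
  rw [← conjTranspose_apply A, ← conjTranspose_apply B, hA, hB]

lemma herm_smul {n : Type*} {A : Matrix n n ℂ} (hA : A.IsHermitian) (c : ℂ)
    (hc : star c = c) : (c • A).IsHermitian := by
  unfold Matrix.IsHermitian
  rw [Matrix.conjTranspose_smul, hc, hA]

lemma trρ₀ : ρ₀.trace = 1 := by
  simp [Matrix.trace, ρ₀, idx4, Matrix.diag, Fintype.sum_prod_type,
    Fin.sum_univ_two, Matrix.vecHead, Matrix.vecTail]
  norm_num

lemma trρ₁ : ρ₁.trace = 1 := by
  simp [Matrix.trace, ρ₁, idx4, Matrix.diag, Fintype.sum_prod_type,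
    Fin.sum_univ_two, Matrix.vecHead, Matrix.vecTail]
  norm_num

def u : Fin 2 × Fin 2 → ℂ :=
  fun p => if p = (0,1) then 1 else if p = (1,0) then -1 else 0

lemma star_u (p : Fin 2 × Fin 2) : star (u p) = u p := by
  unfold u; split_ifs <;> simp

lemma ρ₁_eq : ρ₁ = (1/2 : ℂ) • vecMulVec u u := by
  ext ⟨a,b⟩ ⟨c,d⟩
  fin_cases a <;> fin_cases b <;> fin_cases c <;> fin_cases d <;>
    simp [ρ₁, idx4, u, vecMulVec_apply, Matrix.vecHead, Matrix.vecTail, Prod.ext_iff]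

def Amat : Matrix (Fin 1) ((Fin 2 × Fin 2) × (Fin 2 × Fin 2)) ℂ :=
  fun _ p => (1/3 : ℂ) * (u p.1 * u p.2)

lemma key : (4/9 : ℂ) • (ρ₁ ⊗ₖ ρ₁) = Amatᴴ * Amat := by
  ext ⟨p,q⟩ ⟨r,s⟩
  simp only [Matrix.mul_apply, Fin.sum_univ_one, Amat, conjTranspose_apply,
    Matrix.smul_apply, kroneckerMap_apply, ρ₁_eq, vecMulVec_apply, star_mul', star_u,
    smul_eq_mul]
  have : star (1/3 : ℂ) = 1/3 := by norm_num
  rw [this]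
  ring

/-- `Y` is Hermitian, has trace `17/18`, and satisfies the dual constraint for outcome 0
(with `Q₀ = 0`): `Y - (ρ₀ ⊗ ρ₀)/2 = (4/9)·(ρ₁ ⊗ ρ₁) ⪰ 0`. -/
theorem Y_dual_constraint_zero :
    Y.IsHermitian ∧
    Y.trace = 17/18 ∧
    Y - (1/2 : ℂ) • (ρ₀ ⊗ₖ ρ₀) = (4/9 : ℂ) • (ρ₁ ⊗ₖ ρ₁) ∧
    ((4/9 : ℂ) • (ρ₁ ⊗ₖ ρ₁)).PosSemidef := by
  refine ⟨?_, ?_, ?_, ?_⟩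
  · exact herm_smul (Matrix.IsHermitian.add
      (herm_smul (herm_kron hermρ₀ hermρ₀) 9 (by norm_num))
      (herm_smul (herm_kron hermρ₁ hermρ₁) 8 (by norm_num))) (1/18) (by norm_num)
  · simp [Y, Matrix.trace_smul, Matrix.trace_add, Matrix.trace_kronecker, trρ₀, trρ₁]
    norm_num
  · unfold Y; module
  · rw [key]; exact posSemidef_conjTranspose_mul_self Amat
end
end

section
/- Let α be a real number with 0 ≤ α ≤ 1, and define h(α) = −((1+3α)/4)·logb 2 ((1+3α)/4) − 3·((1−α)/4)·logb 2 ((1−α)/4) (with the convention that a term with zero argument contributes 0, as with Real.logb). If h(α) ≥ 1/2, then α ≤ 0.902. -/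
open Real

/-- `log 3 ≤ 1.0986201`, via `3^12 = 2^19 * (531441/524288)`. -/
lemma log_three_le : Real.log 3 ≤ 1.0986201 := by
  have h2hi : Real.log 2 < 0.6931471808 := Real.log_two_lt_d9
  have key : (12:ℝ) * Real.log 3 = 19 * Real.log 2 + Real.log (531441/524288) := by
    have h : ((3:ℝ))^(12:ℕ) = 2^(19:ℕ) * (531441/524288) := by norm_num
    have := congrArg Real.log h
    rw [Real.log_pow, Real.log_mul (by positivity) (by norm_num), Real.log_pow] at this
    push_cast at this
    linarith
  have hub : Real.log ((531441:ℝ)/524288) ≤ 531441/524288 - 1 :=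
    Real.log_le_sub_one_of_pos (by norm_num)
  nlinarith

/-- `log (2000/147) ≤ 2.6126515`, via `2000/147 = 2^4 / (147/125)` and
`(2551/2500)^8 ≤ 147/125`. -/
lemma log_const_le : Real.log (2000/147) ≤ 2.6126515 := by
  have h2hi : Real.log 2 < 0.6931471808 := Real.log_two_lt_d9
  have key : Real.log ((2000:ℝ)/147) = 4 * Real.log 2 - Real.log (147/125) := by
    have h : ((2000:ℝ))/147 = 2^(4:ℕ) / (147/125) := by norm_num
    rw [h, Real.log_div (by positivity) (by norm_num), Real.log_pow]
    push_cast; ring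
  -- lower bound on log (147/125)
  have hmono : Real.log (((2551:ℝ)/2500)^(8:ℕ)) ≤ Real.log (147/125) := by
    apply Real.log_le_log (by positivity)
    norm_num
  rw [Real.log_pow] at hmono
  have hinv : Real.log ((2500:ℝ)/2551) ≤ 2500/2551 - 1 :=
    Real.log_le_sub_one_of_pos (by norm_num)
  have hinv2 : Real.log ((2500:ℝ)/2551) = - Real.log (2551/2500) := by
    rw [show ((2500:ℝ)/2551) = ((2551:ℝ)/2500)⁻¹ by norm_num, Real.log_inv]
  have hlo : (51:ℝ)/2551 ≤ Real.log (2551/2500) := by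
    rw [hinv2] at hinv; linarith
  push_cast at hmono
  nlinarith

/-- If the von Neumann entropy (in bits) of the two-qubit Werner state with parameter `α`
is at least `1/2`, then `α ≤ 0.902`. -/
theorem werner_entropy_bound (α : ℝ) (h0 : 0 ≤ α) (h1 : α ≤ 1)
    (hent : -(((1 + 3*α)/4) * Real.logb 2 ((1 + 3*α)/4)) -
        3 * (((1 - α)/4) * Real.logb 2 ((1 - α)/4)) ≥ 1/2) :
    α ≤ 0.902 := by
  by_contra hc
  push_neg at hc
  set q : ℝ := 3*(1-α)/4 with hq_def
  have hq0 : 0 ≤ q := by rw [hq_def]; linarith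
  have hqu : q ≤ 147/2000 := by rw [hq_def]; linarith
  have hl2lo : (0.6931471803:ℝ) < Real.log 2 := Real.log_two_gt_d9
  have hl2pos : (0:ℝ) < Real.log 2 := by linarith
  have harg1 : (1 + 3*α)/4 = 1 - q := by rw [hq_def]; ring
  have harg2 : (1 - α)/4 = q/3 := by rw [hq_def]; ring
  rw [harg1, harg2] at hent
  rcases eq_or_lt_of_le hq0 with hq0' | hqpos
  · -- q = 0 : entropy is 0, contradiction
    rw [← hq0'] at hent
    norm_num [Real.logb] at hent
  · -- q > 0
    have hqne : q ≠ 0 := ne_of_gt hqpos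
    have hppos : (0:ℝ) < 1 - q := by linarith
    -- convert hent into a statement about natural logs
    simp only [Real.logb] at hent
    have hE : -((1-q) * Real.log (1-q)) - q * Real.log (q/3) ≥ (1/2) * Real.log 2 := by
      have h3 : -((1-q) * (Real.log (1-q) / Real.log 2)) - 3 * (q/3 * (Real.log (q/3) / Real.log 2))
          = (-((1-q) * Real.log (1-q)) - q * Real.log (q/3)) / Real.log 2 := by
        ring
      rw [h3] at hent
      exact (le_div_iff₀ hl2pos).mp hent
    have hsplit : q * Real.log (q/3) = q * Real.log q - q * Real.log 3 := by
      rw [Real.log_div hqne (by norm_num)]; ring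
    -- bound A : -(1-q) log(1-q) ≤ q
    have hA : -((1-q) * Real.log (1-q)) ≤ q := by
      have h := Real.log_le_sub_one_of_pos (x := (1-q)⁻¹) (by positivity)
      rw [Real.log_inv] at h
      have hc1 : (1-q) * (1-q)⁻¹ = 1 := mul_inv_cancel₀ (ne_of_gt hppos)
      nlinarith
    -- bound B : -q log q ≤ q * log(2000/147) + 147/2000 - q
    have hB : -(q * Real.log q) ≤ q * Real.log (2000/147) + 147/2000 - q := by
      have h := Real.log_le_sub_one_of_pos (x := (147/2000)/q) (by positivity)
      rw [Real.log_div (by norm_num) hqne] at h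
      have hlogc : Real.log ((147:ℝ)/2000) = - Real.log (2000/147) := by
        rw [show ((147:ℝ)/2000) = ((2000:ℝ)/147)⁻¹ by norm_num, Real.log_inv]
      rw [hlogc] at h
      have hc1 : q * ((147/2000)/q) = 147/2000 := by field_simp
      nlinarith
    -- numeric log bounds
    have h3le : Real.log 3 ≤ 1.0986201 := log_three_le
    have hLle : Real.log (2000/147) ≤ 2.6126515 := log_const_le
    have hq3 : q * Real.log 3 ≤ q * 1.0986201 :=
      mul_le_mul_of_nonneg_left h3le hq0
    have hqL : q * Real.log (2000/147) ≤ q * 2.6126515 :=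
      mul_le_mul_of_nonneg_left hLle hq0
    -- combine everything
    rw [hsplit] at hE
    nlinarith [hE, hA, hB, hq3, hqL, hqu, hl2lo]
end

section
/- Let α and γ be nonempty finite types and let ρ be a positive semidefinite complex matrix indexed by α × γ with Tr(ρ) = 1. Suppose the partial trace of ρ over γ, the matrix (Tr_γ ρ)(m, n) = ∑_{c} ρ((m,c),(n,c)) indexed by α, equals ψ ψ† (i.e. Matrix.vecMulVec ψ (star ψ)) for some vector ψ ∈ ℂ^α with ∑_m ψ(m)·conj(ψ(m)) = 1. Then for all m, n ∈ α and c, c' ∈ γ, ρ((m,c),(n,c')) = ψ(m)·conj(ψ(n))·σ(c,c'), where σ(c,c') = ∑_{m} ρ((m,c),(m,c')) is the partial trace of ρ over α. -/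
/-!
Write `P = ψψ†`. As `P` is a rank-one projection, `(1 - P) P (1 - P) = 0`; this is the γ-partial
trace of the positive matrix `((1 - P) ⊗ 1) ρ ((1 - P) ⊗ 1)`, which therefore has trace zero, so
positivity of `ρ` forces `ρ ((1 - P) ⊗ 1) = 0`. Hence `ρ = ρ (P ⊗ 1) = (P ⊗ 1) ρ (P ⊗ 1) = P ⊗ τ`
for some `τ`, and tracing out α identifies `τ` with the marginal `σ`.
-/

open Matrix
open scoped ComplexOrder Kronecker

namespace Matrix

variable {α β γ δ R : Type*} [Fintype α]

def partialTraceRight [Fintype γ] [AddCommMonoid R] (ρ : Matrix (α × γ) (β × γ) R) :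
    Matrix α β R :=
  of fun m n => ∑ c, ρ (m, c) (n, c)

def partialTraceLeft [AddCommMonoid R] (ρ : Matrix (α × γ) (α × δ) R) : Matrix γ δ R :=
  of fun c c' => ∑ m, ρ (m, c) (m, c')

theorem trace_partialTraceRight [Fintype γ] [AddCommMonoid R] (ρ : Matrix (α × γ) (α × γ) R) :
    ρ.partialTraceRight.trace = ρ.trace := by
  simp [trace, partialTraceRight, Fintype.sum_prod_type]

theorem partialTraceLeft_kronecker [CommSemiring R] (A : Matrix α α R) (B : Matrix γ δ R) :
    partialTraceLeft (A ⊗ₖ B) = A.trace • B := by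
  ext c c'
  simp [partialTraceLeft, trace, Finset.sum_mul]

theorem partialTraceRight_kronecker_one_mul_mul [Fintype β] [Fintype γ] [Semiring R]
    [DecidableEq γ] {κ μ : Type*} (A : Matrix κ α R) (ρ : Matrix (α × γ) (β × γ) R)
    (B : Matrix β μ R) :
    partialTraceRight ((A ⊗ₖ (1 : Matrix γ γ R)) * ρ * (B ⊗ₖ (1 : Matrix γ γ R))) =
      A * partialTraceRight ρ * B := by
  ext m n
  simp only [partialTraceRight, mul_apply, kroneckerMap_apply, one_apply, mul_ite, mul_one,
    mul_zero, ite_mul, zero_mul, Fintype.sum_prod_type, Finset.sum_ite_eq, Finset.mem_univ,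
    ↓reduceIte, Finset.sum_mul, Finset.sum_ite_eq', of_apply, Finset.mul_sum]
  rw [Finset.sum_comm]
  exact Finset.sum_congr rfl fun _ _ => Finset.sum_comm

theorem vecMulVec_kronecker_one_mul_mul [Fintype β] [Fintype γ] [Fintype δ] [CommSemiring R]
    [DecidableEq γ] [DecidableEq δ] {κ μ : Type*} (u : κ → R) (v : α → R)
    (ρ : Matrix (α × γ) (β × δ) R) (w : β → R) (x : μ → R) :
    (vecMulVec u v ⊗ₖ (1 : Matrix γ γ R)) * ρ * (vecMulVec w x ⊗ₖ (1 : Matrix δ δ R)) =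
      vecMulVec u x ⊗ₖ of fun c c' => ∑ a, ∑ b, v a * ρ (a, c) (b, c') * w b := by
  ext ⟨m, c⟩ ⟨n, c'⟩
  simp only [mul_apply, kroneckerMap_apply, vecMulVec_apply, one_apply, mul_ite, mul_one,
    mul_zero, ite_mul, zero_mul, Fintype.sum_prod_type, Finset.sum_ite_eq, Finset.mem_univ,
    ↓reduceIte, Finset.sum_mul, Finset.sum_ite_eq', of_apply, Finset.mul_sum]
  rw [Finset.sum_comm]
  exact Finset.sum_congr rfl fun _ _ => Finset.sum_congr rfl fun _ _ => by ring

open scoped MatrixOrder in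
theorem PosSemidef.mul_eq_zero_of_trace_conjTranspose_mul_mul_eq_zero {𝕜 : Type*} [RCLike 𝕜]
    {n m : Type*} [Fintype n] [Fintype m] {A : Matrix n n 𝕜} (hA : A.PosSemidef) {B : Matrix n m 𝕜}
    (h : (Bᴴ * A * B).trace = 0) : A * B = 0 := by
  classical
  obtain ⟨C, rfl⟩ := CStarAlgebra.nonneg_iff_eq_star_mul_self.mp hA.nonneg
  rw [star_eq_conjTranspose] at h ⊢
  have hCB : C * B = 0 := by
    rw [← trace_conjTranspose_mul_self_eq_zero_iff, conjTranspose_mul]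
    simpa only [Matrix.mul_assoc] using h
  rw [Matrix.mul_assoc, hCB, Matrix.mul_zero]

theorem PosSemidef.mul_vecMulVec_kronecker_one_eq_self {𝕜 : Type*} [RCLike 𝕜] [Fintype γ]
    [DecidableEq α] [DecidableEq γ] {ρ : Matrix (α × γ) (α × γ) 𝕜} (hρ : ρ.PosSemidef)
    {u : α → 𝕜} (hu : u ⬝ᵥ star u = 1) (h : ρ.partialTraceRight = vecMulVec u (star u)) :
    ρ * (vecMulVec u (star u) ⊗ₖ (1 : Matrix γ γ 𝕜)) = ρ := by
  set P := vecMulVec u (star u)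
  have hPP : P * P = P := by
    rw [vecMulVec_mul_vecMulVec, dotProduct_comm, hu, one_smul]
  have hQ : (1 - P)ᴴ = 1 - P := by
    simp [P, conjTranspose_sub, conjTranspose_vecMulVec]
  have hkill : ρ * ((1 - P) ⊗ₖ (1 : Matrix γ γ 𝕜)) = 0 := by
    refine hρ.mul_eq_zero_of_trace_conjTranspose_mul_mul_eq_zero ?_
    rw [conjTranspose_kronecker, hQ, conjTranspose_one, ← trace_partialTraceRight,
      partialTraceRight_kronecker_one_mul_mul, h, Matrix.sub_mul, Matrix.one_mul, hPP, sub_self,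
      Matrix.zero_mul, trace_zero]
  have hsplit : (1 - P) ⊗ₖ (1 : Matrix γ γ 𝕜) = 1 - P ⊗ₖ 1 := by
    rw [← one_kronecker_one, eq_sub_iff_add_eq, ← add_kronecker, sub_add_cancel]
  rwa [hsplit, Matrix.mul_sub, Matrix.mul_one, sub_eq_zero, eq_comm] at hkill

theorem IsHermitian.eq_vecMulVec_kronecker_partialTraceLeft [CommRing R] [StarRing R] [Fintype γ]
    [DecidableEq γ] {ρ : Matrix (α × γ) (α × γ) R} (hρ : ρ.IsHermitian) {u : α → R}
    (hu : u ⬝ᵥ star u = 1) (h : ρ * (vecMulVec u (star u) ⊗ₖ (1 : Matrix γ γ R)) = ρ) :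
    ρ = vecMulVec u (star u) ⊗ₖ ρ.partialTraceLeft := by
  have hleft : (vecMulVec u (star u) ⊗ₖ (1 : Matrix γ γ R)) * ρ = ρ := by
    simpa [conjTranspose_mul, conjTranspose_kronecker, hρ.eq, conjTranspose_vecMulVec]
      using congrArg (·ᴴ) h
  have hfac : ρ = vecMulVec u (star u) ⊗ₖ
      of fun c c' => ∑ a, ∑ b, star u a * ρ (a, c) (b, c') * u b := by
    conv_lhs => rw [← h, ← hleft]
    rw [vecMulVec_kronecker_one_mul_mul]
  rw [hfac, partialTraceLeft_kronecker, trace_vecMulVec, hu, one_smul]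

end Matrix

theorem pure_marginal_factorizes_general {α γ : Type*} [Fintype α] [Fintype γ]
    (ρ : Matrix (α × γ) (α × γ) ℂ) (hρ : ρ.PosSemidef)
    (ψ : α → ℂ) (hψ : ∑ m, ψ m * (starRingEnd ℂ) (ψ m) = 1)
    (hmarg : (Matrix.of fun m n => ∑ c, ρ (m, c) (n, c)) = Matrix.vecMulVec ψ (star ψ)) :
    ∀ (m n : α) (c c' : γ),
      ρ (m, c) (n, c') = ψ m * (starRingEnd ℂ) (ψ n) * ∑ m', ρ (m', c) (m', c') := by
  classical
  have hfac : ρ = vecMulVec ψ (star ψ) ⊗ₖ ρ.partialTraceLeft :=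
    hρ.isHermitian.eq_vecMulVec_kronecker_partialTraceLeft hψ
      (hρ.mul_vecMulVec_kronecker_one_eq_self hψ hmarg)
  intro m n c c'
  exact congrFun (congrFun hfac (m, c)) (n, c')

/-- If a bipartite density matrix `ρ` on `α × γ` has a pure marginal `ψψ†` on `α`, then it
factorizes as `ρ((m,c),(n,c')) = ψ(m)·conj(ψ(n))·σ(c,c')` where `σ` is the marginal on `γ`. -/
theorem pure_marginal_factorizes {α γ : Type*} [Fintype α] [Fintype γ]
    [Nonempty α] [Nonempty γ] [DecidableEq α] [DecidableEq γ]
    (ρ : Matrix (α × γ) (α × γ) ℂ) (hρ : ρ.PosSemidef) (htr : ρ.trace = 1)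
    (ψ : α → ℂ) (hψ : ∑ m, ψ m * (starRingEnd ℂ) (ψ m) = 1)
    (hmarg : (Matrix.of fun m n => ∑ c, ρ (m, c) (n, c)) = Matrix.vecMulVec ψ (star ψ)) :
    ∀ (m n : α) (c c' : γ),
      ρ (m, c) (n, c') = ψ m * (starRingEnd ℂ) (ψ n) * ∑ m', ρ (m', c) (m', c') :=
  pure_marginal_factorizes_general ρ hρ ψ hψ hmarg
end
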